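/- arXiv:1610.10018 — 3 statements merged into one kernel-verified Lean document; each statement's English description precedes it below -/
import Mathlib

section
/- If for every increasing event E and F one has P(E ∩ F) ≥ P(E)·P(F), then for any increasing events A₁,…,A_N one has max{P(A_n) : 1 ≤ n ≤ N} ≥ 1 − (1 − P(A₁ ∪ ⋯ ∪ A_N))^{1/N}. -/
/-!
Passing to complements, FKG for increasing events says that the decreasing events `A i ᶜ` are
positively correlated, so `P(⋂ i, (A i)ᶜ) ≥ ∏ i, P((A i)ᶜ) ≥ (1 - max_i P(A i))^N`.
Taking `N`-th roots gives the bound.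
-/

open MeasureTheory

/-- An event in `{0,1}^E` is increasing if it is stable under turning coordinates
from `0` to `1` (i.e. it is upward closed for the pointwise order). -/
def IncreasingEvent {E : Type*} (A : Set (E → Bool)) : Prop :=
  ∀ ω ω' : E → Bool, ω ≤ ω' → ω ∈ A → ω' ∈ A

lemma increasingEvent_iff_isUpperSet {E : Type*} {A : Set (E → Bool)} :
    IncreasingEvent A ↔ IsUpperSet A :=
  Iff.rfl

section PositiveCorrelation

variable {Ω : Type*} [MeasurableSpace Ω]

lemma one_sub_mul_one_sub_le_one_sub_measureReal_union (μ : Measure Ω) [IsFiniteMeasure μ]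
    {A B : Set Ω} (hB : MeasurableSet B) (hAB : μ.real A * μ.real B ≤ μ.real (A ∩ B)) :
    (1 - μ.real A) * (1 - μ.real B) ≤ 1 - μ.real (A ∪ B) := by
  have := measureReal_union_add_inter (μ := μ) (s := A) hB
  nlinarith

lemma prod_one_sub_measureReal_le_one_sub_measureReal_biUnion [Preorder Ω]
    (μ : Measure Ω) [IsProbabilityMeasure μ]
    (hFKG : ∀ A B : Set Ω, MeasurableSet A → MeasurableSet B → IsUpperSet A → IsUpperSet B →
      μ.real A * μ.real B ≤ μ.real (A ∩ B))
    {ι : Type*} {A : ι → Set Ω} (hmeas : ∀ i, MeasurableSet (A i))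
    (hup : ∀ i, IsUpperSet (A i)) (s : Finset ι) :
    ∏ i ∈ s, (1 - μ.real (A i)) ≤ 1 - μ.real (⋃ i ∈ s, A i) := by
  classical
  induction s using Finset.induction_on with
  | empty => simp
  | insert a s ha ih =>
    have hU : MeasurableSet (⋃ i ∈ s, A i) := s.measurableSet_biUnion fun i _ => hmeas i
    have hUup : IsUpperSet (⋃ i ∈ s, A i) := isUpperSet_iUnion₂ fun i _ => hup i
    rw [Finset.prod_insert ha, Finset.set_biUnion_insert]
    calc (1 - μ.real (A a)) * ∏ i ∈ s, (1 - μ.real (A i))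
        ≤ (1 - μ.real (A a)) * (1 - μ.real (⋃ i ∈ s, A i)) :=
          mul_le_mul_of_nonneg_left ih (sub_nonneg.2 measureReal_le_one)
      _ ≤ 1 - μ.real (A a ∪ ⋃ i ∈ s, A i) :=
          one_sub_mul_one_sub_le_one_sub_measureReal_union μ hU
            (hFKG _ _ (hmeas a) hU (hup a) hUup)

end PositiveCorrelation

lemma one_sub_rpow_one_div_le_of_one_sub_pow_le {x y : ℝ} {N : ℕ} (hN : N ≠ 0) (hx : x ≤ 1)
    (h : (1 - x) ^ N ≤ 1 - y) : 1 - (1 - y) ^ ((1 : ℝ) / N) ≤ x := by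
  have hx0 : 0 ≤ 1 - x := sub_nonneg.2 hx
  have hroot : 1 - x ≤ (1 - y) ^ ((1 : ℝ) / N) := by
    calc 1 - x = ((1 - x) ^ N) ^ ((1 : ℝ) / N) := by
          rw [one_div, Real.pow_rpow_inv_natCast hx0 hN]
      _ ≤ (1 - y) ^ ((1 : ℝ) / N) := by gcongr
  linarith

theorem square_root_trick_general {E : Type*}
    (μ : Measure (E → Bool)) [IsProbabilityMeasure μ]
    (hFKG : ∀ A B : Set (E → Bool), MeasurableSet A → MeasurableSet B →
      IncreasingEvent A → IncreasingEvent B →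
      (μ A).toReal * (μ B).toReal ≤ (μ (A ∩ B)).toReal)
    (N : ℕ) (hN : 1 ≤ N) (A : Fin N → Set (E → Bool))
    (hmeas : ∀ i, MeasurableSet (A i)) (hinc : ∀ i, IncreasingEvent (A i)) :
    ∃ i : Fin N,
      1 - (1 - (μ (⋃ i, A i)).toReal) ^ ((1 : ℝ) / N) ≤ (μ (A i)).toReal := by
  have : NeZero N := ⟨by omega⟩
  obtain ⟨j, hj⟩ := Finite.exists_max fun i => μ.real (A i)
  refine ⟨j, one_sub_rpow_one_div_le_of_one_sub_pow_le (by omega) measureReal_le_one ?_⟩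
  calc (1 - μ.real (A j)) ^ N = ∏ _i : Fin N, (1 - μ.real (A j)) := by simp
    _ ≤ ∏ i, (1 - μ.real (A i)) :=
        Finset.prod_le_prod (fun _ _ => sub_nonneg.2 measureReal_le_one)
          fun i _ => sub_le_sub_left (hj i) 1
    _ ≤ 1 - μ.real (⋃ i, A i) := by
        simpa using prod_one_sub_measureReal_le_one_sub_measureReal_biUnion μ
          (fun B C hB hC hBup hCup => hFKG B C hB hC
            (increasingEvent_iff_isUpperSet.2 hBup) (increasingEvent_iff_isUpperSet.2 hCup))
          hmeas (fun i => increasingEvent_iff_isUpperSet.1 (hinc i)) Finset.univ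

/-- square-root trick. If a probability measure on `{0,1}^E`
satisfies the FKG inequality for increasing events, then for increasing events
`A 1, …, A N`, `max P(A i) ≥ 1 - (1 - P(A 1 ∪ ⋯ ∪ A N))^(1/N)`. -/
theorem square_root_trick {E : Type*} [Countable E]
    (μ : Measure (E → Bool)) [IsProbabilityMeasure μ]
    (hFKG : ∀ A B : Set (E → Bool), MeasurableSet A → MeasurableSet B →
      IncreasingEvent A → IncreasingEvent B →
      (μ A).toReal * (μ B).toReal ≤ (μ (A ∩ B)).toReal)
    (N : ℕ) (hN : 1 ≤ N) (A : Fin N → Set (E → Bool))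
    (hmeas : ∀ i, MeasurableSet (A i)) (hinc : ∀ i, IncreasingEvent (A i)) :
    ∃ i : Fin N,
      1 - (1 - (μ (⋃ i, A i)).toReal) ^ ((1 : ℝ) / N) ≤ (μ (A i)).toReal :=
  square_root_trick_general μ hFKG N hN A hmeas hinc
end

section
/- Let (a_n)_{n≥1} be a sequence of nonnegative reals satisfying a_{m+n} ≤ a_m + a_n for all m,n ≥ 1, and suppose there is a constant c ∈ (0,1) with a_{2n} ≤ (2−c)·a_n for all n ≥ 1. Then there exists ε > 0 and a constant A > 0 such that a_n ≤ A·n^{1−ε} for all n ≥ 1. -/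
/-- A nonnegative subadditive sequence satisfying the
improved doubling bound `a (2n) ≤ (2 - c) * a n` grows at most like `n^(1-ε)`. -/
theorem subadditive_sublinear (a : ℕ → ℝ) (ha : ∀ n, 0 ≤ a n)
    (hsub : ∀ m n : ℕ, 1 ≤ m → 1 ≤ n → a (m + n) ≤ a m + a n)
    (c : ℝ) (hc0 : 0 < c) (hc1 : c < 1)
    (hdbl : ∀ n : ℕ, 1 ≤ n → a (2 * n) ≤ (2 - c) * a n) :
    ∃ ε : ℝ, 0 < ε ∧ ∃ A : ℝ, 0 < A ∧
      ∀ n : ℕ, 1 ≤ n → a n ≤ A * (n : ℝ) ^ ((1 : ℝ) - ε) := by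
  set α : ℝ := Real.logb 2 (2 - c) with hα
  have h2c1 : (1 : ℝ) < 2 - c := by linarith
  have h2c2 : (2 : ℝ) - c < 2 := by linarith
  have hαpos : 0 < α := Real.logb_pos (by norm_num) h2c1
  have hαlt1 : α < 1 := by
    have : Real.logb 2 (2 - c) < Real.logb 2 2 :=
      Real.logb_lt_logb (by norm_num) (by linarith) h2c2
    simpa [Real.logb_self_eq_one] using this
  have hpow : (2 : ℝ) ^ α = 2 - c := Real.rpow_logb (by norm_num) (by norm_num) (by linarith)
  set C : ℝ := (a 1 + 1) / (1 - c) with hC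
  have hCpos : 0 < C := div_pos (by have := ha 1; linarith) (by linarith)
  have hC1 : a 1 ≤ C := by
    rw [hC, le_div_iff₀ (by linarith)]
    nlinarith [ha 1, hc0.le]
  have hC2 : a 1 ≤ (1 - c) * C := by
    rw [hC, mul_div_cancel₀ _ (show (1:ℝ)-c ≠ 0 by linarith)]
    linarith
  -- main induction
  have key : ∀ n : ℕ, 1 ≤ n → a n ≤ C * (2 * (n : ℝ) ^ α - 1) := by
    intro n
    induction n using Nat.strong_induction_on with
    | _ n ih =>
      intro hn
      rcases Nat.lt_or_ge n 2 with h2 | h2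
      · interval_cases n
        simp only [Nat.cast_one, Real.one_rpow]
        linarith
      · -- n ≥ 2 : split even / odd
        rcases Nat.even_or_odd n with ⟨m, hm⟩ | ⟨m, hm⟩
        · have hm1 : 1 ≤ m := by omega
          have hmn : m < n := by omega
          have h1 : a n ≤ (2 - c) * a m := by
            have := hdbl m hm1
            rw [two_mul] at this; rw [hm]; exact this
          have h2' : a m ≤ C * (2 * (m : ℝ) ^ α - 1) := ih m hmn hm1
          have hcast : ((n : ℝ)) = 2 * (m : ℝ) := by
            rw [hm]; push_cast; ring
          have hpow2 : ((n : ℝ)) ^ α = (2 - c) * (m : ℝ) ^ α := by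
            rw [hcast, Real.mul_rpow (by norm_num) (Nat.cast_nonneg m), hpow]
          rw [hpow2]
          nlinarith [ha m, Real.rpow_nonneg (Nat.cast_nonneg m) α]
        · have hm1 : 1 ≤ m := by omega
          have hmn : m < n := by omega
          have h1 : a n ≤ (2 - c) * a m + a 1 := by
            have hs := hsub (2 * m) 1 (by omega) le_rfl
            have hd := hdbl m hm1
            have : n = 2 * m + 1 := by omega
            rw [this]; linarith
          have h2' : a m ≤ C * (2 * (m : ℝ) ^ α - 1) := ih m hmn hm1
          have hcast : (2 : ℝ) * (m : ℝ) ≤ (n : ℝ) := by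
            have : (2 * m : ℕ) ≤ n := by omega
            exact_mod_cast (by push_cast [this]; exact_mod_cast this : ((2*m:ℕ):ℝ) ≤ (n:ℝ))
          have hpow2 : (2 - c) * (m : ℝ) ^ α ≤ ((n : ℝ)) ^ α := by
            have : ((2 : ℝ) * (m : ℝ)) ^ α ≤ (n : ℝ) ^ α :=
              Real.rpow_le_rpow (by positivity) hcast hαpos.le
            rwa [Real.mul_rpow (by norm_num) (Nat.cast_nonneg m), hpow] at this
          nlinarith [ha m, Real.rpow_nonneg (Nat.cast_nonneg m) α]
  refine ⟨1 - α, by linarith, 2 * C, by linarith, fun n hn => ?_⟩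
  have := key n hn
  have hα' : (1 : ℝ) - (1 - α) = α := by ring
  rw [hα']
  nlinarith [Real.rpow_nonneg (Nat.cast_nonneg n) α]
end

section
/- In oriented Bernoulli percolation on L at parameter p, for all integers k, n, s ≥ 1, the probability that R_n ≥ k·s (where R_n is the right-most point of ℓ_n connected to the nonpositive part of ℓ_0) satisfies P_p(R_n ≥ k·s) ≤ H_p(s,n)^k. -/
open MeasureTheory

namespace OrientedPerc

/-- Vertices of the plane; the lattice `L` consists of those with even coordinate sum. -/
abbrev Vtx := ℤ × ℤ

/-- An oriented edge is given by its base vertex and a direction: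
`true` for the edge to `x + (1,1)`, `false` for the edge to `x + (-1,1)`. -/
abbrev Edge := Vtx × Bool

/-- A percolation configuration: each oriented edge is open (`true`) or closed. -/
abbrev Config := Edge → Bool

/-- The endpoint of an oriented edge. -/
def tip (e : Edge) : Vtx := e.1 + (if e.2 then (1, 1) else (-1, 1))

/-- One open oriented step from `x` to `y`. -/
def Step (ω : Config) (x y : Vtx) : Prop :=
  ∃ b : Bool, ω (x, b) = true ∧ y = tip (x, b)

/-- `x → y`: there is an open oriented path from `x` to `y`. -/
def Conn (ω : Config) (x y : Vtx) : Prop := Relation.ReflTransGen (Step ω) x y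

/-- `x → y` using only vertices in the set `S`. -/
def ConnIn (S : Set Vtx) (ω : Config) (x y : Vtx) : Prop :=
  x ∈ S ∧ Relation.ReflTransGen (fun a b => Step ω a b ∧ b ∈ S) x y

/-- The box `[a,b] × [c,d]` intersected with the lattice `L`. -/
def box (a b c d : ℤ) : Set Vtx :=
  {v | a ≤ v.1 ∧ v.1 ≤ b ∧ c ≤ v.2 ∧ v.2 ≤ d ∧ Even (v.1 + v.2)}

/-- The box `[a,b] × [c,d]` is crossed vertically (bottom to top). -/
def CrossedVert (ω : Config) (a b c d : ℤ) : Prop :=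
  ∃ x y : Vtx, x.2 = c ∧ y.2 = d ∧ ConnIn (box a b c d) ω x y

/-- The box `[a,b] × [c,d]` is crossed from left to right. -/
def CrossedLR (ω : Config) (a b c d : ℤ) : Prop :=
  ∃ x y : Vtx, x.1 = a ∧ y.1 = b ∧ ConnIn (box a b c d) ω x y

/-- `μ` is Bernoulli oriented bond percolation with parameter `p`:
the states of edges are i.i.d., each open with probability `p`. -/
def IsBernoulli (μ : Measure Config) (p : ℝ) : Prop :=
  IsProbabilityMeasure μ ∧ p ∈ Set.Icc (0 : ℝ) 1 ∧
    ∀ (s : Finset Edge) (f : Edge → Bool),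
      (μ {ω | ∀ e ∈ s, ω e = f e}).toReal = ∏ e ∈ s, (if f e then p else 1 - p)

/-- Probability of a vertical crossing of `[0,m] × [0,n]`. -/
noncomputable def V (μ : Measure Config) (m n : ℕ) : ℝ :=
  (μ {ω | CrossedVert ω 0 (m : ℤ) 0 (n : ℤ)}).toReal

/-- Probability of a left-right crossing of `[0,m] × [0,n]`. -/
noncomputable def H (μ : Measure Config) (m n : ℕ) : ℝ :=
  (μ {ω | CrossedLR ω 0 (m : ℤ) 0 (n : ℤ)}).toReal

/-- The event `R_n ≥ t`: some `(y,0)` with `y ≤ 0` even is connected to some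
`(x,n)` with `x ≥ t`. -/
def Rge (ω : Config) (n t : ℤ) : Prop :=
  ∃ x y : ℤ, Even y ∧ y ≤ 0 ∧ t ≤ x ∧ Conn ω (y, 0) (x, n)

/-- The event `0 → ℓ_n`. -/
def ConnToLine (ω : Config) (n : ℤ) : Prop := ∃ x : ℤ, Conn ω (0, 0) (x, n)

end OrientedPerc

/-!
If some `(y, 0)` with `y ≤ 0` is joined to some `(x, n)` with `x ≥ k s`, then for each `i < k`
the piece of the joining path between its last visit to the column `i s` and its first visit after
that to the column `(i + 1) s` crosses the box `[i s, (i + 1) s] × [0, n]` from left to right.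
These crossings are determined by the edges inside the respective boxes, which are pairwise
disjoint, so they are independent, and by translation invariance each has probability at most
`H(s, n)`.
-/

open ProbabilityTheory

theorem DependsOn.cylinder_image_eq {ι : Type*} {α : ι → Type*} {A : Set (Π i, α i)}
    {s : Finset ι} (h : DependsOn (· ∈ A) s) : cylinder s (s.restrict '' A) = A := by
  ext x
  refine ⟨fun ⟨y, hy, hyx⟩ => ?_, fun hx => ⟨x, hx, rfl⟩⟩
  exact (h fun i hi => congrFun hyx ⟨i, hi⟩).mp hy

namespace Relation.ReflTransGen

variable {α : Type*} {r : α → α → Prop} {x y : α}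

theorem mem_of_restrict {S : Set α} (h : ReflTransGen (fun u v => r u v ∧ v ∈ S) x y) (hx : x ∈ S) :
    y ∈ S := by
  rcases h.cases_tail with rfl | ⟨_, _, _, hy⟩
  exacts [hx, hy]

theorem restrict_reachable (h : ReflTransGen r x y) :
    ReflTransGen (fun u v => r u v ∧ ReflTransGen r x v ∧ ReflTransGen r v y) x y := by
  induction h with
  | refl => exact refl
  | tail hxz hzy ih =>
    exact (mono (fun u v ⟨huv, hxv, hvz⟩ => ⟨huv, hxv, hvz.tail hzy⟩) _ _ ih).tail
      ⟨hzy, hxz.tail hzy, refl⟩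

section Crossing

variable {φ : α → ℤ} (hφ : ∀ u v, r u v → φ v ≤ φ u + 1)
include hφ

theorem exists_last_eq (h : ReflTransGen r x y) {a : ℤ} (hx : φ x ≤ a) (hy : a ≤ φ y) :
    ∃ u, φ u = a ∧ ReflTransGen r x u ∧ ReflTransGen (fun v w => r v w ∧ a ≤ φ w) u y := by
  induction h with
  | refl => exact ⟨x, le_antisymm hx hy, refl, refl⟩
  | @tail z y hxz hzy ih =>
    by_cases hz : a ≤ φ z
    · obtain ⟨u, hu, hxu, huz⟩ := ih hz
      exact ⟨u, hu, hxu, huz.tail ⟨hzy, hy⟩⟩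
    · exact ⟨y, by linarith [hφ _ _ hzy], hxz.tail hzy, refl⟩

theorem exists_first_eq (h : ReflTransGen r x y) {b : ℤ} (hx : φ x ≤ b) (hy : b ≤ φ y) :
    ∃ v, φ v = b ∧ ReflTransGen (fun u w => r u w ∧ φ w ≤ b) x v ∧ ReflTransGen r v y := by
  induction h using head_induction_on with
  | refl => exact ⟨y, le_antisymm hx hy, refl, refl⟩
  | @head x z hxz hzy ih =>
    by_cases hxb : φ x = b
    · exact ⟨x, hxb, refl, head hxz hzy⟩
    · have hz : φ z ≤ b := by have := hφ _ _ hxz; omega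
      obtain ⟨v, hv, hzv, hvy⟩ := ih hz
      exact ⟨v, hv, head ⟨hxz, hz⟩ hzv, hvy⟩

theorem exists_crossing (h : ReflTransGen r x y) {a b : ℤ} (hx : φ x ≤ a) (hab : a ≤ b)
    (hy : b ≤ φ y) : ∃ u v, φ u = a ∧ φ v = b ∧ ReflTransGen r x u ∧
      ReflTransGen (fun w w' => r w w' ∧ a ≤ φ w' ∧ φ w' ≤ b) u v := by
  obtain ⟨u, hu, hxu, huy⟩ := exists_last_eq hφ h hx (hab.trans hy)
  obtain ⟨v, hv, huv, -⟩ := exists_first_eq (fun w w' h => hφ w w' h.1) huy (hu.trans_le hab) hy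
  exact ⟨u, v, hu, hv, hxu, mono (fun w w' ⟨⟨hr, ha⟩, hb⟩ => ⟨hr, ha, hb⟩) _ _ huv⟩

end Crossing

end Relation.ReflTransGen

namespace OrientedPerc

variable {ω : Config} {x y : Vtx}

theorem Step.fst_eq (h : Step ω x y) : y.1 = x.1 + 1 ∨ y.1 = x.1 - 1 := by
  obtain ⟨b, -, rfl⟩ := h
  cases b <;> simp [tip, sub_eq_add_neg]

theorem Step.snd_eq (h : Step ω x y) : y.2 = x.2 + 1 := by
  obtain ⟨b, -, rfl⟩ := h
  cases b <;> simp [tip]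

theorem Conn.snd_le (h : Conn ω x y) : x.2 ≤ y.2 := by
  induction h with
  | refl => exact le_rfl
  | tail _ hstep ih => linarith [hstep.snd_eq]

theorem Conn.even_add_iff (h : Conn ω x y) : Even (y.1 + y.2) ↔ Even (x.1 + x.2) := by
  induction h with
  | refl => exact Iff.rfl
  | tail _ hstep ih =>
    have := hstep.fst_eq
    have := hstep.snd_eq
    rw [← ih]
    simp only [Int.even_iff]
    omega

theorem Rge.crossedLR {n t a b : ℤ} (h : Rge ω n t) (ha : 0 ≤ a) (hab : a ≤ b) (hbt : b ≤ t) :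
    CrossedLR ω a b 0 n := by
  obtain ⟨x₀, y₀, hy₀, hy₀le, hx₀, hconn⟩ := h
  let slab : Set Vtx := {v | 0 ≤ v.2 ∧ v.2 ≤ n ∧ Even (v.1 + v.2)}
  have hpath : Relation.ReflTransGen (fun v w => Step ω v w ∧ w ∈ slab) (y₀, 0) (x₀, n) :=
    Relation.ReflTransGen.mono (fun v w ⟨hvw, hw₀, hwn⟩ => ⟨hvw, Conn.snd_le hw₀, Conn.snd_le hwn,
      (Conn.even_add_iff hw₀).2 (by simpa using hy₀)⟩) _ _ hconn.restrict_reachable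
  obtain ⟨u, v, hu, hv, hyu, huv⟩ := hpath.exists_crossing (φ := Prod.fst)
    (fun _ _ h => by have := h.1.fst_eq; omega) (show y₀ ≤ a by omega) hab (show b ≤ x₀ by omega)
  obtain ⟨hu₀, hun, hu_even⟩ := hyu.mem_of_restrict ⟨le_rfl, hconn.snd_le, by simpa using hy₀⟩
  exact ⟨u, v, hu, hv, ⟨hu.ge, hu ▸ hab, hu₀, hun, hu_even⟩,
    Relation.ReflTransGen.mono (fun _ _ ⟨⟨hstep, hw₀, hwn, hw⟩, ha, hb⟩ =>
      ⟨hstep, ha, hb, hw₀, hwn, hw⟩) _ _ huv⟩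

open Classical in
noncomputable def boxEdges (a b c d : ℤ) : Finset Edge :=
  ((Finset.Icc a b ×ˢ Finset.Icc c d) ×ˢ Finset.univ).filter
    fun e => e.1 ∈ box a b c d ∧ tip e ∈ box a b c d

theorem mem_boxEdges {a b c d : ℤ} {e : Edge} :
    e ∈ boxEdges a b c d ↔ e.1 ∈ box a b c d ∧ tip e ∈ box a b c d := by
  simp only [boxEdges, Finset.mem_filter, Finset.mem_product, Finset.mem_Icc, Finset.mem_univ,
    and_true, and_iff_right_iff_imp]
  exact fun ⟨⟨h₁, h₂, h₃, h₄, _⟩, _⟩ => ⟨⟨h₁, h₂⟩, h₃, h₄⟩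

-- Boxes sharing the column `b = a'` share no edge, since every edge changes the column.
theorem disjoint_boxEdges {a b a' b' c d c' d' : ℤ} (h : b ≤ a') :
    Disjoint (boxEdges a b c d) (boxEdges a' b' c' d') := by
  refine Finset.disjoint_left.2 fun e he he' => ?_
  obtain ⟨⟨-, hb, -⟩, ⟨-, htb, -⟩⟩ := mem_boxEdges.1 he
  obtain ⟨⟨ha', -⟩, ⟨hta', -⟩⟩ := mem_boxEdges.1 he'
  rcases e with ⟨v, _ | _⟩ <;> simp [tip] at hb htb ha' hta' <;> omega

theorem ConnIn.of_eqOn {S : Set Vtx} {ω' : Config}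
    (h : ∀ e : Edge, e.1 ∈ S → tip e ∈ S → ω e = ω' e) (hxy : ConnIn S ω x y) :
    ConnIn S ω' x y := by
  obtain ⟨hx, hxy⟩ := hxy
  refine ⟨hx, ?_⟩
  induction hxy with
  | refl => exact .refl
  | tail hxu huv ih =>
    obtain ⟨⟨b, hb, rfl⟩, hv⟩ := huv
    exact ih.tail ⟨⟨b, h _ (hxu.mem_of_restrict hx) hv ▸ hb, rfl⟩, hv⟩

theorem dependsOn_crossedLR (a b c d : ℤ) :
    DependsOn (fun ω => CrossedLR ω a b c d) (boxEdges a b c d : Set Edge) := by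
  have key : ∀ ω ω' : Config, (∀ e ∈ boxEdges a b c d, ω e = ω' e) →
      CrossedLR ω a b c d → CrossedLR ω' a b c d :=
    fun ω ω' h ⟨x, y, hx, hy, hxy⟩ =>
      ⟨x, y, hx, hy, hxy.of_eqOn fun e he hte => h e (mem_boxEdges.2 ⟨he, hte⟩)⟩
  exact fun ω ω' h => propext ⟨key ω ω' h, key ω' ω fun e he => (h e he).symm⟩

def shiftEdge (t : Vtx) (e : Edge) : Edge := (e.1 + t, e.2)

theorem shiftEdge_injective (t : Vtx) : (shiftEdge t).Injective :=
  fun _ _ h => by simpa [shiftEdge, Prod.ext_iff] using h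

theorem Step.shift (h : Step ω x y) (t : Vtx) : Step (ω ∘ shiftEdge t) (x - t) (y - t) := by
  obtain ⟨b, hb, rfl⟩ := h
  refine ⟨b, by simpa [shiftEdge] using hb, ?_⟩
  simp only [tip]
  abel

theorem sub_mem_box {c s n : ℤ} {u w : Vtx} (hu : u ∈ box c (c + s) 0 n) (hu₁ : u.1 = c)
    (hw : w ∈ box c (c + s) 0 n) (huw : u.2 ≤ w.2) : w - (c, c % 2) ∈ box 0 s 0 n := by
  simp only [box, Set.mem_ofPred_eq, Prod.fst_sub, Prod.snd_sub, Int.even_iff] at hu hw ⊢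
  omega

/- The vertical shift by `c % 2` maps `L` to itself, and costs nothing: by parity, a crossing
starting on the column `c` starts at height at least `c % 2`. -/
theorem CrossedLR.shift {c s n : ℤ} (h : CrossedLR ω c (c + s) 0 n) :
    CrossedLR (ω ∘ shiftEdge (c, c % 2)) 0 s 0 n := by
  obtain ⟨u, v, hu, hv, hu_mem, huv⟩ := h
  refine ⟨u - (c, c % 2), v - (c, c % 2), by simp [hu], by simp [hv],
    sub_mem_box hu_mem hu hu_mem le_rfl, ?_⟩
  refine Relation.ReflTransGen.lift (· - (c, c % 2))
    (fun w w' ⟨⟨hstep, hw'⟩, huw', _⟩ => ?_) _ _ huv.restrict_reachable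
  have huw' : u.2 ≤ w'.2 :=
    Conn.snd_le (Relation.ReflTransGen.mono (fun _ _ => And.left) _ _ huw')
  exact ⟨hstep.shift _, sub_mem_box hu_mem hu hw' huw'⟩

namespace IsBernoulli

variable {μ : Measure Config} {p : ℝ}

theorem measure_eval_eq (hB : IsBernoulli μ p) (e : Edge) (b : Bool) :
    μ {ω | ω e = b} = ENNReal.ofReal (if b then p else 1 - p) := by
  have := hB.1
  have h := hB.2.2 {e} fun _ => b
  simp only [Finset.mem_singleton, forall_eq, Finset.prod_singleton] at h
  rw [← h, ENNReal.ofReal_toReal (measure_ne_top μ _)]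

theorem iIndepFun_eval (hB : IsBernoulli μ p) : iIndepFun (fun e (ω : Config) => ω e) μ := by
  have := hB.1
  refine iIndepFun_iff_finset.2 fun s => (iIndepFun_iff_map_fun_eq_pi_map
    fun e => (measurable_pi_apply _).aemeasurable).2 (Measure.ext_of_singleton fun g => ?_)
  let f : Edge → Bool := fun e => if h : e ∈ s then g ⟨e, h⟩ else false
  have hcyl : (fun (ω : Config) (e : s) => ω e) ⁻¹' {g} = {ω | ∀ e ∈ s, ω e = f e} := by
    ext ω
    simp only [Set.mem_preimage, Set.mem_singleton_iff, funext_iff, Subtype.forall,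
      Set.mem_ofPred_eq]
    exact forall₂_congr fun e he => by simp [f, he]
  have hw : ∀ e, 0 ≤ if f e then p else 1 - p := fun e => by
    split <;> linarith [hB.2.1.1, hB.2.1.2]
  rw [Measure.map_apply (measurable_pi_lambda _ fun _ => measurable_pi_apply _)
      (measurableSet_singleton g), hcyl, ← ENNReal.ofReal_toReal (measure_ne_top μ _), hB.2.2,
    ENNReal.ofReal_prod_of_nonneg fun e _ => hw e, ← Finset.prod_coe_sort, Measure.pi_singleton]
  refine Finset.prod_congr rfl fun e _ => ?_
  rw [Measure.map_apply (measurable_pi_apply _) (measurableSet_singleton _),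
    Set.preimage]
  simp only [Set.mem_singleton_iff, measure_eval_eq hB, f, e.2, dite_true]

theorem map_eval_eq (hB : IsBernoulli μ p) (e e' : Edge) :
    μ.map (fun ω : Config => ω e) = μ.map (fun ω : Config => ω e') := by
  refine Measure.ext_of_singleton fun b => ?_
  have hm : ∀ e : Edge, Measurable fun ω : Config => ω e := measurable_pi_apply
  rw [Measure.map_apply (hm e) (measurableSet_singleton b),
    Measure.map_apply (hm e') (measurableSet_singleton b)]
  exact (measure_eval_eq hB e b).trans (measure_eval_eq hB e' b).symm

theorem map_restrict_comp (hB : IsBernoulli μ p) (s : Finset Edge) {τ : Edge → Edge}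
    (hτ : τ.Injective) : μ.map (fun ω : Config => s.restrict (ω ∘ τ)) = μ.map s.restrict := by
  have hmeas : ∀ e, AEMeasurable (fun ω : Config => ω e) μ :=
    fun e => (measurable_pi_apply e).aemeasurable
  calc μ.map (fun ω : Config => s.restrict (ω ∘ τ))
      = Measure.pi fun e : s => μ.map fun ω : Config => ω (τ e) :=
        ((hB.iIndepFun_eval.precomp hτ).restrict s).map_fun_eq_pi_map fun _ => hmeas _
    _ = Measure.pi fun e : s => μ.map fun ω : Config => ω e := by
        congr 1; funext e; exact map_eval_eq hB _ _
    _ = μ.map s.restrict :=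
        ((hB.iIndepFun_eval.restrict s).map_fun_eq_pi_map fun _ => hmeas _).symm

theorem measure_comp_mem (hB : IsBernoulli μ p) {A : Set Config} {s : Finset Edge}
    (hA : DependsOn (· ∈ A) s) {τ : Edge → Edge} (hτ : τ.Injective) :
    μ {ω | ω ∘ τ ∈ A} = μ A := by
  rw [← hA.cylinder_image_eq]
  have hB' : MeasurableSet (s.restrict '' A) := (Set.toFinite _).measurableSet
  change μ ((fun ω : Config => s.restrict (ω ∘ τ)) ⁻¹' (s.restrict '' A))
    = μ (s.restrict ⁻¹' (s.restrict '' A))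
  rw [← Measure.map_apply (by fun_prop) hB', ← Measure.map_apply (by fun_prop) hB',
    map_restrict_comp hB s hτ]

theorem measure_inter_eq_mul (hB : IsBernoulli μ p) {A A' : Set Config} {s s' : Finset Edge}
    (hA : DependsOn (· ∈ A) s) (hA' : DependsOn (· ∈ A') s') (hss' : Disjoint s s') :
    μ (A ∩ A') = μ A * μ A' := by
  rw [← hA.cylinder_image_eq, ← hA'.cylinder_image_eq]
  exact (hB.iIndepFun_eval.indepFun_finset s s' hss'
    measurable_pi_apply).measure_inter_preimage_eq_mul _ _
      (Set.toFinite _).measurableSet (Set.toFinite _).measurableSet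

theorem measure_biInter_eq_prod (hB : IsBernoulli μ p) {ι : Type*} [DecidableEq ι] (t : Finset ι)
    {A : ι → Set Config} {s : ι → Finset Edge} (hA : ∀ i ∈ t, DependsOn (· ∈ A i) (s i))
    (hs : (t : Set ι).PairwiseDisjoint s) :
    μ (⋂ i ∈ t, A i) = ∏ i ∈ t, μ (A i) := by
  induction t using Finset.induction_on with
  | empty => simp [hB.1.measure_univ]
  | insert j t hj ih =>
    have hdep : DependsOn (· ∈ ⋂ i ∈ t, A i) (t.biUnion s : Set Edge) := fun ω ω' h => by
      simp only [Set.mem_iInter]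
      exact propext <| forall₂_congr fun i hi => (hA i (Finset.mem_insert_of_mem hi)
        fun e he => h e (Finset.mem_biUnion.2 ⟨i, hi, he⟩)).to_iff
    have hdisj : Disjoint (s j) (t.biUnion s) :=
      (Finset.disjoint_biUnion_right _ _ _).2 fun i hi => hs (Finset.mem_insert_self j t)
        (Finset.mem_insert_of_mem hi) (ne_of_mem_of_not_mem hi hj).symm
    rw [Finset.set_biInter_insert, Finset.prod_insert hj,
      measure_inter_eq_mul hB (hA j (Finset.mem_insert_self j t)) hdep hdisj,
      ih (fun i hi => hA i (Finset.mem_insert_of_mem hi)) (hs.subset (by simp))]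

end IsBernoulli

theorem rightmost_point_upper_tail_general (μ : Measure Config) (p : ℝ) (hB : IsBernoulli μ p)
    (k s n : ℕ) :
    (μ {ω | Rge ω (n : ℤ) ((k * s : ℕ) : ℤ)}).toReal ≤ H μ s n ^ k := by
  have := hB.1
  let C : ℕ → Set Config := fun i => {ω | CrossedLR ω (i * s : ℕ) ((i * s : ℕ) + s) 0 n}
  have hlt : ∀ {i j : ℕ}, i < j → i * s + s ≤ j * s := fun h => by nlinarith
  have hforced : {ω | Rge ω n (k * s : ℕ)} ⊆ ⋂ i ∈ Finset.range k, C i := fun ω hω =>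
    Set.mem_iInter₂.2 fun i hi => hω.crossedLR (by positivity) (by simp)
      (by exact_mod_cast hlt (Finset.mem_range.1 hi))
  have hindep : μ (⋂ i ∈ Finset.range k, C i) = ∏ i ∈ Finset.range k, μ (C i) :=
    hB.measure_biInter_eq_prod _ (fun i _ => dependsOn_crossedLR ..) fun i _ j _ hij =>
      (lt_or_gt_of_ne hij).elim (fun h => disjoint_boxEdges (by exact_mod_cast hlt h))
        fun h => (disjoint_boxEdges (by exact_mod_cast hlt h)).symm
  have hshift : ∀ i, μ (C i) ≤ μ {ω | CrossedLR ω 0 s 0 n} := fun i =>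
    (measure_mono fun ω hω => CrossedLR.shift hω).trans_eq
      (hB.measure_comp_mem (dependsOn_crossedLR ..) (shiftEdge_injective _))
  rw [H, ← ENNReal.toReal_pow]
  refine ENNReal.toReal_mono (by finiteness) ?_
  calc μ {ω | Rge ω n (k * s : ℕ)} ≤ μ (⋂ i ∈ Finset.range k, C i) := measure_mono hforced
    _ = ∏ i ∈ Finset.range k, μ (C i) := hindep
    _ ≤ μ {ω | CrossedLR ω 0 s 0 n} ^ k := by
      simpa using Finset.prod_le_pow_card (Finset.range k) _ _ fun i _ => hshift i

/-- `P_p(R_n ≥ k·s) ≤ H_p(s,n)^k`: the event `R_n ≥ ks` forces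
`k` disjoint (hence independent) left-right crossings of translates of
`[0,s] × [0,n]`. -/
theorem rightmost_point_upper_tail (μ : Measure Config) (p : ℝ) (hB : IsBernoulli μ p)
    (k s n : ℕ) (hk : 1 ≤ k) (hs : 1 ≤ s) (hn : 1 ≤ n) :
    (μ {ω | Rge ω (n : ℤ) ((k * s : ℕ) : ℤ)}).toReal ≤ H μ s n ^ k :=
  rightmost_point_upper_tail_general μ p hB k s n

end OrientedPerc
end
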